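/- Let T be an expanding 2×2 integer matrix and D ⊂ ℤ² a finite digit set. Then F(T,D) is connected if and only if there is a finite sequence t₁, t₂, …, t_s of elements of D such that every element of D occurs among the t_i and t_i − t_{i+1} ∈ F − F for all 1 ≤ i ≤ s−1 (equivalently, each nonzero consecutive difference lies in the neighbor set 𝒩). -/

import Mathlib

open Matrix Pointwise

/-- The canonical cast of an integer vector to a real vector. -/
def castVec {k : ℕ} (d : Fin k → ℤ) : Fin k → ℝ := fun i => (d i : ℝ)

/-- An integer matrix is expanding if all of its (complex) eigenvalues have modulus
greater than one. -/
def IsExpanding {k : ℕ} (T : Matrix (Fin k) (Fin k) ℤ) : Prop :=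
  ∀ μ : ℂ, (T.map (fun a => (a : ℂ))).charpoly.IsRoot μ → 1 < ‖μ‖

/-!
Write `f_d x = T⁻¹ (x + d)`, so that `F = ⋃ d ∈ D, f_d '' F`. Since `T⁻¹` is injective, the
pieces `f_d '' F` and `f_e '' F` meet exactly when `d - e ∈ F - F`; a sequence as in the theorem
is a walk through all of `D` in the graph with these edges, and exists iff the graph is connected.

If `F` is connected, so is this graph: the pieces over a component and over its complement would
otherwise split `F` into two disjoint nonempty closed sets. Conversely, if the graph is connected,
induction on `n` joins any two points of `F` by a chain in `F` whose steps lie in `T⁻ⁿ (F - F)`: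
map a chain by `f_d`, and pass from piece to piece through common points. All eigenvalues of
`T⁻¹` lie in the open unit disc, so `T⁻ⁿ → 0` by Gelfand's formula, and a compact set that is
`ε`-chain connected for every `ε > 0` is connected.
-/

open Filter Topology Relation

theorem tendsto_pow_atTop_nhds_zero_of_spectralRadius_lt_one {A : Type*} [NormedRing A]
    [NormedAlgebra ℂ A] [CompleteSpace A] {a : A} (h : spectralRadius ℂ a < 1) :
    Tendsto (fun n => a ^ n) atTop (𝓝 0) := by
  obtain ⟨r, hr, hr1⟩ := ENNReal.lt_iff_exists_nnreal_btwn.mp h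
  have hr1 : (r : ℝ) < 1 := by exact_mod_cast hr1
  have hroot : ∀ᶠ n : ℕ in atTop, ENNReal.ofReal (‖a ^ n‖ ^ (1 / n : ℝ)) < r :=
    (spectrum.pow_norm_pow_one_div_tendsto_nhds_spectralRadius a).eventually_lt_const hr
  refine squeeze_zero_norm' ?_ (tendsto_pow_atTop_nhds_zero_of_lt_one r.2 hr1)
  filter_upwards [hroot, eventually_ne_atTop 0] with n hn hn0
  rw [ENNReal.ofReal_lt_iff_lt_toReal (by positivity) ENNReal.coe_ne_top, ENNReal.coe_toReal,
    one_div] at hn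
  calc ‖a ^ n‖ = (‖a ^ n‖ ^ (n⁻¹ : ℝ)) ^ n := (Real.rpow_inv_natCast_pow (norm_nonneg _) hn0).symm
    _ ≤ (r : ℝ) ^ n := pow_le_pow_left₀ (by positivity) hn.le n

namespace Matrix

variable {ι : Type*} [Fintype ι] [DecidableEq ι]

theorem isUnit_of_forall_isRoot_charpoly_one_lt_norm {M : Matrix ι ι ℂ}
    (hM : ∀ μ : ℂ, M.charpoly.IsRoot μ → 1 < ‖μ‖) : IsUnit M :=
  (spectrum.zero_notMem_iff ℂ).mp fun h0 =>
    (hM 0 (mem_spectrum_iff_isRoot_charpoly.mp h0)).not_ge (by simp)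

section

attribute [local instance] Matrix.linftyOpNormedRing Matrix.linftyOpNormedAlgebra

theorem spectralRadius_inv_lt_one {M : Matrix ι ι ℂ}
    (hM : ∀ μ : ℂ, M.charpoly.IsRoot μ → 1 < ‖μ‖) : spectralRadius ℂ M⁻¹ < 1 := by
  have hu := isUnit_of_forall_isRoot_charpoly_one_lt_norm hM
  rcases (spectrum ℂ M⁻¹).eq_empty_or_nonempty with hempty | hne
  · simp [spectralRadius, hempty]
  refine spectrum.spectralRadius_lt_of_forall_lt_of_nonempty hne fun z hz => ?_
  rw [← hu.unit_spec, ← coe_units_inv, ← spectrum.map_inv, Set.mem_inv, hu.unit_spec,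
    mem_spectrum_iff_isRoot_charpoly] at hz
  have hz' := hM _ hz
  rw [norm_inv] at hz'
  rcases eq_or_ne z 0 with rfl | hz0
  · simp
  · rw [← NNReal.coe_lt_coe, coe_nnnorm, NNReal.coe_one]
    exact (one_lt_inv₀ (norm_pos_iff.mpr hz0)).mp hz'

theorem tendsto_inv_pow_of_forall_isRoot_charpoly_one_lt_norm {M : Matrix ι ι ℂ}
    (hM : ∀ μ : ℂ, M.charpoly.IsRoot μ → 1 < ‖μ‖) :
    Tendsto (fun n => M⁻¹ ^ n) atTop (𝓝 0) :=
  tendsto_pow_atTop_nhds_zero_of_spectralRadius_lt_one (spectralRadius_inv_lt_one hM)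

theorem eventually_forall_norm_mulVec_lt {M : ℕ → Matrix ι ι ℝ} (hM : Tendsto M atTop (𝓝 0))
    {S : Set (ι → ℝ)} (hS : Bornology.IsBounded S) {ε : ℝ} (hε : 0 < ε) :
    ∀ᶠ n in atTop, ∀ v ∈ S, ‖M n *ᵥ v‖ < ε := by
  obtain ⟨R, hR⟩ := hS.subset_closedBall 0
  have hlim : Tendsto (fun n => ‖M n‖ * R) atTop (𝓝 0) := by
    simpa using (tendsto_zero_iff_norm_tendsto_zero.mp hM).mul_const R
  filter_upwards [hlim.eventually_lt_const hε] with n hn v hv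
  calc ‖M n *ᵥ v‖ ≤ ‖M n‖ * ‖v‖ := linfty_opNorm_mulVec _ _
    _ ≤ ‖M n‖ * R := by gcongr; simpa using hR hv
    _ < ε := hn

end

theorem inv_map_ofReal {M : Matrix ι ι ℝ} (hM : IsUnit M) :
    (M.map (↑) : Matrix ι ι ℂ)⁻¹ = M⁻¹.map (↑) := by
  refine inv_eq_right_inv ?_
  change M.map Complex.ofRealHom * M⁻¹.map Complex.ofRealHom = 1
  rw [← Matrix.map_mul, mul_nonsing_inv M ((isUnit_iff_isUnit_det M).mp hM),
    Matrix.map_one _ (by simp) (by simp)]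

theorem isUnit_of_isUnit_map_ofReal {M : Matrix ι ι ℝ}
    (h : IsUnit (M.map (↑) : Matrix ι ι ℂ)) : IsUnit M := by
  rw [isUnit_iff_isUnit_det, isUnit_iff_ne_zero] at h ⊢
  rw [← Complex.ofReal_ne_zero]
  convert h using 1
  exact RingHom.map_det Complex.ofRealHom M

theorem tendsto_inv_pow_of_forall_isRoot_charpoly_map_one_lt_norm {M : Matrix ι ι ℝ}
    (hM : ∀ μ : ℂ, (M.map (↑)).charpoly.IsRoot μ → 1 < ‖μ‖) :
    Tendsto (fun n => M⁻¹ ^ n) atTop (𝓝 0) := by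
  have hu := isUnit_of_isUnit_map_ofReal (isUnit_of_forall_isRoot_charpoly_one_lt_norm hM)
  have hre : Continuous fun N : Matrix ι ι ℂ => N.map Complex.re :=
    continuous_id.matrix_map Complex.continuous_re
  have hre_pow : ∀ n, (((M.map (↑) : Matrix ι ι ℂ)⁻¹ ^ n).map Complex.re) = M⁻¹ ^ n := by
    intro n
    rw [inv_map_ofReal hu]
    change ((M⁻¹).map Complex.ofRealHom ^ n).map Complex.re = _
    rw [← Matrix.map_pow, map_map]
    exact map_id' _
  convert (hre.tendsto 0).comp (tendsto_inv_pow_of_forall_isRoot_charpoly_one_lt_norm hM) using 1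
  · exact funext fun n => (hre_pow n).symm
  · simp

end Matrix

theorem IsExpanding.one_lt_norm_of_isRoot_charpoly_map {k : ℕ} {T : Matrix (Fin k) (Fin k) ℤ}
    (hT : IsExpanding T) (μ : ℂ)
    (hμ : ((T.map (fun a => (a : ℝ))).map (↑)).charpoly.IsRoot μ) : 1 < ‖μ‖ := by
  refine hT μ ?_
  convert hμ using 3
  rw [Matrix.map_map]
  congr

theorem IsExpanding.isUnit_map {k : ℕ} {T : Matrix (Fin k) (Fin k) ℤ} (hT : IsExpanding T) :
    IsUnit (T.map (fun a => (a : ℝ))) :=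
  Matrix.isUnit_of_isUnit_map_ofReal
    (Matrix.isUnit_of_forall_isRoot_charpoly_one_lt_norm hT.one_lt_norm_of_isRoot_charpoly_map)

theorem IsExpanding.tendsto_inv_pow {k : ℕ} {T : Matrix (Fin k) (Fin k) ℤ}
    (hT : IsExpanding T) :
    Tendsto (fun n => (T.map (fun a => (a : ℝ)))⁻¹ ^ n) atTop (𝓝 0) :=
  Matrix.tendsto_inv_pow_of_forall_isRoot_charpoly_map_one_lt_norm
    hT.one_lt_norm_of_isRoot_charpoly_map

theorem reflTransGen_of_isPreconnected_biUnion {ι X : Type*} [TopologicalSpace X]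
    {s : Finset ι} {K : ι → Set X} (hK : ∀ i ∈ s, IsClosed (K i))
    (hKne : ∀ i ∈ s, (K i).Nonempty) (hconn : IsPreconnected (⋃ i ∈ s, K i)) {i j : ι}
    (hi : i ∈ s) (hj : j ∈ s) :
    ReflTransGen (fun i j => i ∈ s ∧ j ∈ s ∧ (K i ∩ K j).Nonempty) i j := by
  classical
  by_contra hij
  set S := s.filter (ReflTransGen (fun i j => i ∈ s ∧ j ∈ s ∧ (K i ∩ K j).Nonempty) i)
  have hcover : ⋃ l ∈ s, K l ⊆ (⋃ l ∈ S, K l) ∪ ⋃ l ∈ s \ S, K l := by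
    intro x hx
    obtain ⟨l, hl, hxl⟩ := Set.mem_iUnion₂.mp hx
    by_cases hlS : l ∈ S
    · exact Or.inl (Set.mem_biUnion hlS hxl)
    · exact Or.inr (Set.mem_biUnion (Finset.mem_sdiff.mpr ⟨hl, hlS⟩) hxl)
  have hiS : i ∈ S := Finset.mem_filter.mpr ⟨hi, .refl⟩
  have hjS : j ∈ s \ S := Finset.mem_sdiff.mpr ⟨hj, fun h => hij (Finset.mem_filter.mp h).2⟩
  obtain ⟨x, hxi⟩ := hKne i hi
  obtain ⟨y, hyj⟩ := hKne j hj
  obtain ⟨z, -, hzS, hzS'⟩ := isPreconnected_closed_iff.mp hconn _ _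
    (isClosed_biUnion_finset fun l hl => hK l (Finset.mem_filter.mp hl).1)
    (isClosed_biUnion_finset fun l hl => hK l (Finset.mem_sdiff.mp hl).1) hcover
    ⟨x, Set.mem_biUnion hi hxi, Set.mem_biUnion hiS hxi⟩
    ⟨y, Set.mem_biUnion hj hyj, Set.mem_biUnion hjS hyj⟩
  obtain ⟨l, hlS, hzl⟩ := Set.mem_iUnion₂.mp hzS
  obtain ⟨l', hl'S, hzl'⟩ := Set.mem_iUnion₂.mp hzS'
  obtain ⟨hl's, hl'notS⟩ := Finset.mem_sdiff.mp hl'S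
  obtain ⟨hls, hil⟩ := Finset.mem_filter.mp hlS
  exact hl'notS (Finset.mem_filter.mpr ⟨hl's, hil.tail ⟨hls, hl's, z, hzl, hzl'⟩⟩)

theorem IsCompact.isPreconnected_of_forall_reflTransGen {X : Type*} [MetricSpace X]
    {F : Set X} (hF : IsCompact F)
    (h : ∀ ε > 0, ∀ x ∈ F, ∀ y ∈ F,
      ReflTransGen (fun a b => a ∈ F ∧ b ∈ F ∧ dist a b < ε) x y) :
    IsPreconnected F := by
  rw [isPreconnected_closed_iff]
  rintro t t' ht ht' hcover ⟨x, hxF, hxt⟩ ⟨y, hyF, hyt'⟩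
  by_contra hdisj
  obtain ⟨r, hr, hsep⟩ := Metric.exists_pos_forall_lt_edist (hF.inter_right ht)
    (hF.isClosed.inter ht') (Set.disjoint_left.mpr fun z hz hz' => hdisj ⟨z, hz.1, hz.2, hz'.2⟩)
  have hchain : ∀ z, ReflTransGen (fun a b => a ∈ F ∧ b ∈ F ∧ dist a b < r) x z → z ∈ t := by
    intro z hz
    induction hz with
    | refl => exact hxt
    | tail _ hbc ih =>
      obtain ⟨hbF, hcF, hbc⟩ := hbc
      refine (hcover hcF).resolve_right fun hct' => (hsep _ ⟨hbF, ih⟩ _ ⟨hcF, hct'⟩).not_gt ?_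
      exact edist_lt_coe.mpr (by exact_mod_cast hbc)
  exact hdisj ⟨y, hyF, hchain y (h r hr x hxF y hyF), hyt'⟩

theorem List.exists_isChain_cons_of_forall_reflTransGen {α : Type*} {r : α → α → Prop}
    [Std.Symm r] (l : List α) (a : α) (h : ∀ x ∈ l, ReflTransGen r a x) :
    ∃ L, (a :: L).IsChain r ∧ ∀ x ∈ l, x ∈ a :: L := by
  induction l generalizing a with
  | nil => exact ⟨[], .singleton a, by simp⟩
  | cons x l ih =>
    obtain ⟨M, hM, hMx⟩ := exists_isChain_cons_of_relationReflTransGen (h x mem_cons_self)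
    obtain ⟨L, hL, hlL⟩ := ih x fun y hy => (symm (h x mem_cons_self)).trans (h y (by simp [hy]))
    have hxM : x ∈ a :: M := hMx ▸ getLast_mem _
    refine ⟨M ++ L, ?_, ?_⟩
    · rw [← cons_append]
      refine hM.append hL.tail fun z hz y hy => ?_
      rw [getLast?_eq_some_getLast (cons_ne_nil a M), hMx, Option.mem_some_iff] at hz
      exact hz ▸ isChain_cons.mp hL |>.1 y hy
    · intro y hy
      rcases mem_cons.mp hy with rfl | hy
      · exact mem_append_left L hxM
      · rcases mem_cons.mp (hlL y hy) with rfl | hyL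
        · exact mem_append_left L hxM
        · exact mem_cons_of_mem a (mem_append_right M hyL)

theorem exists_isChain_iff_forall_reflTransGen {α : Type*} {s : Finset α} {r : α → α → Prop}
    [Std.Symm r] :
    (∃ L : List α, (∀ x ∈ s, x ∈ L) ∧ (∀ x ∈ L, x ∈ s) ∧ L.IsChain r) ↔
      ∀ x ∈ s, ∀ y ∈ s, ReflTransGen (fun x y => x ∈ s ∧ y ∈ s ∧ r x y) x y := by
  have : Std.Symm fun x y => x ∈ s ∧ y ∈ s ∧ r x y := ⟨fun x y h => ⟨h.2.1, h.1, symm h.2.2⟩⟩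
  constructor
  · rintro ⟨L, hsL, hLs, hL⟩ x hx y hy
    have hL' : L.IsChain fun x y => x ∈ s ∧ y ∈ s ∧ r x y :=
      (List.IsChain.iff_mem.mp hL).imp fun a b h => ⟨hLs a h.1, hLs b h.2.1, h.2.2⟩
    obtain _ | ⟨a, L⟩ := L
    · exact absurd (hsL x hx) List.not_mem_nil
    have hreach := hL'.induction (ReflTransGen _ a) _ (fun _ _ h ha => ha.tail h) fun _ => .refl
    exact (symm (hreach x (hsL x hx))).trans (hreach y (hsL y hy))
  · intro h
    rcases s.eq_empty_or_nonempty with rfl | ⟨a, ha⟩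
    · exact ⟨[], by simp, by simp, .nil⟩
    obtain ⟨L, hL, hsL⟩ := List.exists_isChain_cons_of_forall_reflTransGen s.toList a
      fun x hx => h a ha x (Finset.mem_toList.mp hx)
    exact ⟨a :: L, fun x hx => hsL x (Finset.mem_toList.mpr hx),
      hL.induction (· ∈ s) _ (fun _ _ h _ => h.2.1) fun _ => ha, hL.imp fun _ _ h => h.2.2⟩

theorem castVec_sub {k : ℕ} (a b : Fin k → ℤ) : castVec (a - b) = castVec a - castVec b := by
  funext i
  simp [castVec]

def digitMap {k : ℕ} (A : Matrix (Fin k) (Fin k) ℝ) (d : Fin k → ℤ) (x : Fin k → ℝ) :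
    Fin k → ℝ :=
  A *ᵥ (x + castVec d)

theorem continuous_digitMap {k : ℕ} (A : Matrix (Fin k) (Fin k) ℝ) (d : Fin k → ℤ) :
    Continuous (digitMap A d) :=
  continuous_const.matrix_mulVec (continuous_id.add continuous_const)

theorem digitMap_sub_digitMap {k : ℕ} (A : Matrix (Fin k) (Fin k) ℝ) (d : Fin k → ℤ)
    (x y : Fin k → ℝ) :
    digitMap A d x - digitMap A d y = A *ᵥ (x - y) := by
  simp only [digitMap, ← mulVec_sub, add_sub_add_right_eq_sub]

def digitAdj {k : ℕ} (A : Matrix (Fin k) (Fin k) ℝ) (D : Finset (Fin k → ℤ))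
    (F : Set (Fin k → ℝ)) (d e : Fin k → ℤ) : Prop :=
  d ∈ D ∧ e ∈ D ∧ (digitMap A d '' F ∩ digitMap A e '' F).Nonempty

section Attractor

variable {k : ℕ} {A : Matrix (Fin k) (Fin k) ℝ} {D : Finset (Fin k → ℤ)} {F : Set (Fin k → ℝ)}

theorem image_digitMap_inter_nonempty_iff (hA : Function.Injective A.mulVec) (d e : Fin k → ℤ) :
    (digitMap A d '' F ∩ digitMap A e '' F).Nonempty ↔ castVec (d - e) ∈ F - F := by
  have key : ∀ x y, digitMap A d x = digitMap A e y ↔ y - x = castVec (d - e) := fun x y => by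
    rw [digitMap, digitMap, hA.eq_iff, castVec_sub, sub_eq_sub_iff_add_eq_add, add_comm (castVec d)]
    exact eq_comm
  constructor
  · rintro ⟨_, ⟨x, hx, rfl⟩, y, hy, hyx⟩
    exact ⟨y, hy, x, hx, (key x y).mp hyx.symm⟩
  · rintro ⟨y, hy, x, hx, hyx⟩
    exact ⟨digitMap A d x, ⟨x, hx, rfl⟩, y, hy, ((key x y).mpr hyx).symm⟩

theorem reflTransGen_sub_mem_image_pow (hfix : F = ⋃ d ∈ D, digitMap A d '' F)
    (hD : ∀ d ∈ D, ∀ e ∈ D, ReflTransGen (digitAdj A D F) d e)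
    (n : ℕ) {x y : Fin k → ℝ} (hx : x ∈ F) (hy : y ∈ F) :
    ReflTransGen (fun a b => a ∈ F ∧ b ∈ F ∧ a - b ∈ (A ^ n *ᵥ ·) '' (F - F)) x y := by
  have hpiece : ∀ d ∈ D, ∀ x ∈ F, digitMap A d x ∈ F := fun d hd x hx => by
    rw [hfix]
    exact Set.mem_biUnion hd ⟨x, hx, rfl⟩
  induction n generalizing x y with
  | zero => exact .single ⟨hx, hy, x - y, Set.sub_mem_sub hx hy, by simp⟩
  | succ n ih =>
    have hmap : ∀ d ∈ D, ∀ {u v}, u ∈ F → v ∈ F → ReflTransGen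
        (fun a b => a ∈ F ∧ b ∈ F ∧ a - b ∈ (A ^ (n + 1) *ᵥ ·) '' (F - F))
        (digitMap A d u) (digitMap A d v) := fun d hd u v hu hv =>
      ReflTransGen.lift (digitMap A d)
        (fun a b ⟨ha, hb, w, hw, hab⟩ => ⟨hpiece d hd a ha, hpiece d hd b hb, w, hw, by
          rw [digitMap_sub_digitMap, ← hab, mulVec_mulVec, pow_succ']⟩) _ _ (ih hu hv)
    rw [hfix] at hx hy
    obtain ⟨d, hd, x', hx', rfl⟩ := by simpa using hx
    obtain ⟨e, he, y', hy', rfl⟩ := by simpa using hy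
    have hreach : ∀ c, ReflTransGen (digitAdj A D F) d c → c ∈ D → ∀ q ∈ F, ReflTransGen
          (fun a b => a ∈ F ∧ b ∈ F ∧ a - b ∈ (A ^ (n + 1) *ᵥ ·) '' (F - F))
          (digitMap A d x') (digitMap A c q) := by
      intro c hc
      induction hc with
      | refl => exact fun _ q hq => hmap d hd hx' hq
      | tail _ hbc ih' =>
        obtain ⟨hb, hc, _, ⟨u, hu, rfl⟩, v, hv, hvu⟩ := hbc
        exact fun _ q hq => (hvu ▸ ih' hb u hu).trans (hmap _ hc hv hq)
    exact hreach e (hD d hd e he) he y' hy'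

theorem isPreconnected_iff_forall_reflTransGen_digitAdj (hF : IsCompact F) (hne : F.Nonempty)
    (hfix : F = ⋃ d ∈ D, digitMap A d '' F) (hA : Tendsto (fun n => A ^ n) atTop (𝓝 0)) :
    IsPreconnected F ↔ ∀ d ∈ D, ∀ e ∈ D, ReflTransGen (digitAdj A D F) d e := by
  constructor
  · intro hconn d hd e he
    rw [hfix] at hconn
    exact reflTransGen_of_isPreconnected_biUnion
      (fun d _ => (hF.image (continuous_digitMap A d)).isClosed) (fun d _ => hne.image _)
      hconn hd he
  · intro hD
    refine hF.isPreconnected_of_forall_reflTransGen fun ε hε x hx y hy => ?_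
    obtain ⟨n, hn⟩ :=
      (Matrix.eventually_forall_norm_mulVec_lt hA (hF.isBounded.sub hF.isBounded) hε).exists
    refine ReflTransGen.mono (fun a b hab => ?_) _ _
      (reflTransGen_sub_mem_image_pow hfix hD n hx hy)
    obtain ⟨ha, hb, w, hw, hwab⟩ := hab
    exact ⟨ha, hb, by rw [dist_eq_norm, ← hwab]; exact hn w hw⟩

end Attractor

theorem isConnected_attractor_iff {k : ℕ} (T : Matrix (Fin k) (Fin k) ℤ) (hT : IsExpanding T)
    (D : Finset (Fin k → ℤ)) (F : Set (Fin k → ℝ)) (hne : F.Nonempty) (hcpt : IsCompact F)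
    (hfix : F = ⋃ d ∈ D,
      (fun x => (T.map (fun a => (a : ℝ)))⁻¹ *ᵥ (x + castVec d)) '' F) :
    IsConnected F ↔
      ∃ L : List (Fin k → ℤ), (∀ d ∈ D, d ∈ L) ∧ (∀ d ∈ L, d ∈ D) ∧
        L.IsChain (fun a b => castVec (a - b) ∈ F - F) := by
  have hinj : Function.Injective (T.map (fun a => (a : ℝ)))⁻¹.mulVec :=
    Matrix.mulVec_injective_iff_isUnit.mpr (Matrix.isUnit_nonsing_inv_iff.mpr hT.isUnit_map)
  have : Std.Symm fun a b : Fin k → ℤ => castVec (a - b) ∈ F - F := ⟨fun a b ⟨u, hu, v, hv, h⟩ =>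
    ⟨v, hv, u, hu, show v - u = castVec (b - a) by
      rw [← neg_sub u v, show u - v = castVec (a - b) from h, castVec_sub, castVec_sub, neg_sub]⟩⟩
  rw [IsConnected, and_iff_right hne, isPreconnected_iff_forall_reflTransGen_digitAdj hcpt hne hfix
    hT.tendsto_inv_pow, exists_isChain_iff_forall_reflTransGen]
  unfold digitAdj
  simp only [image_digitMap_inter_nonempty_iff hinj]

theorem stmt9_general (T : Matrix (Fin 2) (Fin 2) ℤ) (hT : IsExpanding T)
    (D : Finset (Fin 2 → ℤ))
    (F : Set (Fin 2 → ℝ)) (hne : F.Nonempty) (hcpt : IsCompact F)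
    (hfix : F = ⋃ d ∈ D,
      (fun x => (T.map (fun a => (a : ℝ)))⁻¹ *ᵥ (x + castVec d)) '' F) :
    IsConnected F ↔
      ∃ L : List (Fin 2 → ℤ), (∀ d ∈ D, d ∈ L) ∧ (∀ d ∈ L, d ∈ D) ∧
        L.Chain' (fun a b => castVec (a - b) ∈ F - F) :=
  isConnected_attractor_iff T hT D F hne hcpt hfix

/-- Let `T` be an expanding `2×2` integer matrix and `D ⊂ ℤ²` a finite
digit set, with attractor `F = F(T,D)` (the unique nonempty compact set with
`F = ⋃_{d ∈ D} T⁻¹(F + d)`).  Then `F` is connected iff `D` can be arranged into a finite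
sequence `t₁, …, t_s` of elements of `D`, containing every element of `D`, whose
consecutive differences `tᵢ - tᵢ₊₁` all lie in `F - F`. -/
theorem stmt9 (T : Matrix (Fin 2) (Fin 2) ℤ) (hT : IsExpanding T)
    (D : Finset (Fin 2 → ℤ)) (hD : D.Nonempty)
    (F : Set (Fin 2 → ℝ)) (hne : F.Nonempty) (hcpt : IsCompact F)
    (hfix : F = ⋃ d ∈ D,
      (fun x => (T.map (fun a => (a : ℝ)))⁻¹ *ᵥ (x + castVec d)) '' F) :
    IsConnected F ↔
      ∃ L : List (Fin 2 → ℤ), (∀ d ∈ D, d ∈ L) ∧ (∀ d ∈ L, d ∈ D) ∧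
        L.Chain' (fun a b => castVec (a - b) ∈ F - F) :=
  stmt9_general T hT D F hne hcpt hfix
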